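/- arXiv:2407.06638 — 5 statements merged into one kernel-verified Lean document; each statement's English description precedes it below -/
import Mathlib

section
/- A rooted binary phylogenetic network N on leaf set X is tree-child (every non-leaf vertex has a child that is a tree vertex or a leaf) if and only if every vertex of N has a tree path, i.e., a directed path to some leaf all of whose vertices, except possibly the first, are tree vertices or leaves. -/
structure Net (X : Type) where
  V : Type
  fintypeV : Fintype V
  E : V → V → Prop
  root : V
  leaf : X → V
  leaf_inj : Function.Injective leaf
  acyclic : ∀ v : V, ¬ Relation.TransGen E v v
  no_in_root : ∀ u : V, ¬ E u root
  connected : ∀ v : V, Relation.ReflTransGen E root v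

namespace Net

variable {X : Type} (N : Net X)

noncomputable instance : Fintype N.V := N.fintypeV

/-- The in-degree of a vertex. -/
noncomputable def indeg (v : N.V) : ℕ := {u : N.V | N.E u v}.ncard

/-- The out-degree of a vertex. -/
noncomputable def outdeg (v : N.V) : ℕ := {u : N.V | N.E v u}.ncard

/-- A vertex is a leaf if it is labelled by an element of `X`. -/
def IsLeaf (v : N.V) : Prop := ∃ x : X, N.leaf x = v

/-- `N` is a (rooted) phylogenetic network on `X`: the root has out-degree two, the
leaves are exactly the out-degree-zero vertices and have in-degree one, and every
other vertex is a tree vertex (in-degree one, out-degree two) or a reticulation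
(in-degree at least two, out-degree one). -/
def ValidNet : Prop :=
  N.outdeg N.root = 2 ∧
  (∀ x : X, N.indeg (N.leaf x) = 1 ∧ N.outdeg (N.leaf x) = 0) ∧
  (∀ v : N.V, N.outdeg v = 0 → N.IsLeaf v) ∧
  (∀ v : N.V, v ≠ N.root → ¬ N.IsLeaf v →
    (N.indeg v = 1 ∧ N.outdeg v = 2) ∨ (2 ≤ N.indeg v ∧ N.outdeg v = 1))

/-- A reticulation is a vertex of in-degree at least two. -/
def IsReticulation (v : N.V) : Prop := 2 ≤ N.indeg v

/-- `N` is binary if every reticulation has in-degree exactly two. -/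
def Binary : Prop := ∀ v : N.V, N.IsReticulation v → N.indeg v = 2

/-- `N` is tree-child: every non-leaf vertex has a child of in-degree at most one
(i.e. a child that is a tree vertex or a leaf). -/
def TreeChild : Prop := ∀ v : N.V, ¬ N.IsLeaf v → ∃ c : N.V, N.E v c ∧ N.indeg c ≤ 1

/-- The reticulation edge `(u,v)` is a shortcut: there is a directed path from `u`
to `v` avoiding the edge `(u,v)`. -/
def Shortcut (u v : N.V) : Prop :=
  N.E u v ∧ 2 ≤ N.indeg v ∧ ∃ p : N.V, p ≠ u ∧ N.E p v ∧ Relation.ReflTransGen N.E u p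

def HasNoShortcut : Prop := ∀ u v : N.V, ¬ N.Shortcut u v

/-- `N` is a normal network: a tree-child phylogenetic network with no shortcut. -/
def Normal : Prop := N.ValidNet ∧ N.TreeChild ∧ N.HasNoShortcut

/-- `N` is a (rooted) binary phylogenetic `X`-tree: a phylogenetic network with
no reticulations. -/
def IsBinTree : Prop := N.ValidNet ∧ ∀ v : N.V, N.indeg v ≤ 1

/-- There is a tree path from `v` to the leaf labelled `x`: a directed path all of
whose vertices except possibly `v` are tree vertices or leaves. -/
def TreePathTo (v : N.V) (x : X) : Prop :=
  Relation.ReflTransGen (fun a b => N.E a b ∧ N.indeg b ≤ 1) v (N.leaf x)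

/-- The hybridisation number `h(N) = ∑_{v ≠ root} (indeg v − 1)`. -/
noncomputable def hyb : ℕ := ∑ v : N.V, (N.indeg v - 1)

/-- The number of reticulations of `N`. -/
noncomputable def numRetic : ℕ := {v : N.V | N.IsReticulation v}.ncard

/-- The number of shortcuts of `N`. -/
noncomputable def numShortcuts : ℕ := {q : N.V × N.V | N.Shortcut q.1 q.2}.ncard

/-- The length of the shortcut `(u,v)`: the number of vertices in the union of the
vertex sets of all directed paths from `u` to a parent of `v`. -/
noncomputable def scLen (u v : N.V) : ℕ :=
  {w : N.V | ∃ p : N.V, N.E p v ∧ Relation.ReflTransGen N.E u w ∧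
    Relation.ReflTransGen N.E w p}.ncard

/-- `{a, b}` is a cherry: the leaves labelled `a` and `b` have a common parent. -/
def Cherry (a b : X) : Prop :=
  a ≠ b ∧ ∃ p : N.V, N.E p (N.leaf a) ∧ N.E p (N.leaf b)

/-- `{a, b}` is a reticulated cherry with reticulation leaf `a`: the parent of `a`
is a reticulation and the parent of `b` is one of its parents. -/
def RetCherry (a b : X) : Prop :=
  a ≠ b ∧ ∃ pa pb : N.V, N.E pa (N.leaf a) ∧ N.E pb (N.leaf b) ∧
    N.IsReticulation pa ∧ N.E pb pa

/-- The cluster of a vertex: the set of leaf labels reachable from it. -/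
def cluster (v : N.V) : Set X := {x : X | Relation.ReflTransGen N.E v (N.leaf x)}

/-- Isomorphism of phylogenetic networks on `X`. -/
def Iso (M : Net X) : Prop :=
  ∃ e : N.V ≃ M.V, (∀ u v : N.V, N.E u v ↔ M.E (e u) (e v)) ∧
    ∀ x : X, e (N.leaf x) = M.leaf x

end Net

/-- An embedding of the tree `T` in the network `N`: an injective map on vertices
(respecting leaf labels) together with, for each edge of `T`, a directed path in `N`
between the images, such that internal vertices of these paths avoid the image of
the map and paths of distinct edges are internally disjoint. -/
structure Emb {X : Type} (N T : Net X) where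
  φ : T.V → N.V
  inj : Function.Injective φ
  leafmap : ∀ x : X, φ (T.leaf x) = N.leaf x
  paths : T.V → T.V → List N.V
  chain : ∀ u v : T.V, T.E u v → List.Chain' N.E (φ u :: paths u v ++ [φ v])
  internal : ∀ u v : T.V, T.E u v → ∀ w ∈ paths u v, w ∉ Set.range φ
  disjoint : ∀ u v u' v' : T.V, T.E u v → T.E u' v' → (u, v) ≠ (u', v') →
    ∀ w ∈ paths u v, w ∉ paths u' v'

/-- The vertex list of the path used for the tree edge `(u,v)`. -/
def Emb.pathList {X : Type} {N T : Net X} (e : Emb N T) (u v : T.V) : List N.V :=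
  e.φ u :: e.paths u v ++ [e.φ v]

/-- The set of edges of `N` used by the embedding. -/
def Emb.edges {X : Type} {N T : Net X} (e : Emb N T) : Set (N.V × N.V) :=
  {q : N.V × N.V | ∃ u v : T.V, T.E u v ∧
    q ∈ (e.pathList u v).zip (e.pathList u v).tail}

/-- `N` displays the tree `T`. -/
def Net.Displays {X : Type} (N T : Net X) : Prop := Nonempty (Emb N T)

/-- The set of clusters of a tree (or network). -/
def Net.clusterSet {X : Type} (T : Net X) : Set (Set X) :=
  {C : Set X | ∃ v : T.V, T.cluster v = C}

/-- The display set of `N` is, up to isomorphism, the set `P` of binary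
phylogenetic `X`-trees. -/
def Net.DisplaySetIs {X : Type} (N : Net X) (P : Set (Net X)) : Prop :=
  ∀ T : Net X, T.IsBinTree → (N.Displays T ↔ ∃ S ∈ P, T.Iso S)

/-- `P` is tightly normal compatible: it is the display set of a binary normal
network on `X`. -/
def TightlyNC {X : Type} (P : Set (Net X)) : Prop :=
  ∃ N : Net X, N.Normal ∧ N.Binary ∧ N.DisplaySetIs P

/-- A binary phylogenetic network is tree-child iff every vertex has a
tree path to some leaf. -/
theorem stmt0 {X : Type} (N : Net X) (hvalid : N.ValidNet) (hbin : N.Binary) :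
    N.TreeChild ↔ ∀ v : N.V, ∃ x : X, N.TreePathTo v x := by
  constructor
  · intro htc
    have : Finite N.V := Finite.of_fintype _
    have hwf : WellFounded (fun a b : N.V => Relation.TransGen N.E b a) := by
      have h1 : IsTrans N.V (fun a b : N.V => Relation.TransGen N.E b a) :=
        ⟨fun a b c hab hbc => hbc.trans hab⟩
      have h2 : IsIrrefl N.V (fun a b : N.V => Relation.TransGen N.E b a) :=
        ⟨fun a h => N.acyclic a h⟩
      exact Finite.wellFounded_of_trans_of_irrefl _
    intro v
    refine hwf.induction (C := fun v => ∃ x : X, N.TreePathTo v x) v ?_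
    intro v ih
    by_cases hl : N.IsLeaf v
    · obtain ⟨x, hx⟩ := hl
      exact ⟨x, hx ▸ Relation.ReflTransGen.refl⟩
    · obtain ⟨c, hec, hind⟩ := htc v hl
      obtain ⟨x, hx⟩ := ih c (Relation.TransGen.single hec)
      exact ⟨x, Relation.ReflTransGen.head ⟨hec, hind⟩ hx⟩
  · intro h v hv
    obtain ⟨x, hp⟩ := h v
    rcases hp.cases_head with h0 | ⟨c, ⟨hec, hind⟩, _⟩
    · exact absurd ⟨x, h0.symm⟩ hv
    · exact ⟨c, hec, hind⟩
end

section
/- If N is a binary normal network on X with k reticulations, then the display set of N (the set of binary phylogenetic X-trees displayed by N) has exactly 2^k elements. -/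
/-!
A switching of `N` chooses one parent of every reticulation. Keeping only the chosen
reticulation edges leaves a spanning tree of `N` (tree-child guarantees that no vertex loses all
its children, and the absence of shortcuts that the root keeps both), and suppressing its
non-branching vertices gives a binary `X`-tree displayed by `N`. Conversely, the edges used by
an embedding of a binary tree enter every vertex at most once, so they lie in the spanning tree
of some switching, and the tree is the suppression of that spanning tree.

Distinct switchings give non-isomorphic trees: at a lowest reticulation `r` where `σ` and `σ'`
differ, the cluster of the parent that `σ` chooses for `r` is a cluster of the tree of `σ` but,
by tree-child and the absence of shortcuts, not of the tree of `σ'`. A binary network with `k`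
reticulations has `2 ^ k` switchings.
-/

open Relation Function

namespace Relation

variable {α : Type*} {r u : α → α → Prop} {a b c v : α}

theorem ReflTransGen.total_of_leftUnique (U : Relator.LeftUnique r)
    (hac : ReflTransGen r a c) (hbc : ReflTransGen r b c) :
    ReflTransGen r a b ∨ ReflTransGen r b a := by
  have U' : Relator.RightUnique (Function.swap r) := fun _ _ _ h h' => U h h'
  simpa only [reflTransGen_swap, or_comm] using
    ReflTransGen.total_of_right_unique U' (reflTransGen_swap.2 hac) (reflTransGen_swap.2 hbc)

theorem ReflTransGen.of_rel_of_ne (U : Relator.LeftUnique r) (hac : ReflTransGen r a c)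
    (hne : a ≠ c) (hbc : r b c) : ReflTransGen r a b := by
  rcases hac.cases_tail with rfl | ⟨b', hab', hb'c⟩
  · exact absurd rfl hne
  · exact U hb'c hbc ▸ hab'

theorem ReflTransGen.reflTransGen_or_of_le (hur : ∀ ⦃x y⦄, u x y → r x y)
    (U : Relator.LeftUnique r) (hac : ReflTransGen u a c) (hvc : ReflTransGen r v c) :
    ReflTransGen u a v ∨ ReflTransGen r v a := by
  induction hac with
  | refl => exact Or.inr hvc
  | tail hab hbc ih =>
    rcases hvc.cases_tail with rfl | ⟨b', hvb', hb'c⟩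
    · exact Or.inl (hab.tail hbc)
    · exact ih (U hb'c (hur hbc) ▸ hvb')

end Relation

namespace List

variable {α : Type*} {r : α → α → Prop}

theorem IsChain.rel_of_mem_zip_tail :
    ∀ {l : List α}, IsChain r l → ∀ {a b : α}, (a, b) ∈ l.zip l.tail → r a b
  | [], _, _, _, h => by simp at h
  | [_], _, _, _, h => by simp at h
  | x :: y :: l, hl, a, b, h => by
    rw [tail_cons, zip_cons_cons, mem_cons, Prod.mk.injEq] at h
    rcases h with ⟨rfl, rfl⟩ | h
    · exact (isChain_cons_cons.mp hl).1
    · exact (isChain_cons_cons.mp hl).2.rel_of_mem_zip_tail h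

theorem reflTransGen_mem_zip_tail (l : List α) (x y : α) :
    ReflTransGen (fun a b => (a, b) ∈ (x :: (l ++ [y])).zip (l ++ [y])) x y := by
  induction l generalizing x with
  | nil => exact ReflTransGen.single (by simp)
  | cons c l ih =>
    refine ReflTransGen.head (by simp) (ReflTransGen.mono (fun a b hab => ?_) _ _ (ih c))
    simp only [cons_append, zip_cons_cons]
    exact mem_cons_of_mem _ hab

theorem Nodup.eq_of_mem_zip_tail_left :
    ∀ {l : List α}, l.Nodup → ∀ {a b b' : α}, (a, b) ∈ l.zip l.tail →
      (a, b') ∈ l.zip l.tail → b = b'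
  | [], _, _, _, _, h, _ => by simp at h
  | [_], _, _, _, _, h, _ => by simp at h
  | x :: y :: l, hl, a, b, b', h, h' => by
    rw [tail_cons, zip_cons_cons, mem_cons, Prod.mk.injEq] at h h'
    have hx : x ∉ y :: l := (nodup_cons.mp hl).1
    rcases h with ⟨rfl, rfl⟩ | h <;> rcases h' with ⟨h1, rfl⟩ | h'
    · rfl
    · exact absurd (of_mem_zip h').1 hx
    · exact absurd (h1 ▸ (of_mem_zip h).1) hx
    · exact (nodup_cons.mp hl).2.eq_of_mem_zip_tail_left h h'

theorem Nodup.eq_of_mem_zip_tail_right :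
    ∀ {l : List α}, l.Nodup → ∀ {a a' b : α}, (a, b) ∈ l.zip l.tail →
      (a', b) ∈ l.zip l.tail → a = a'
  | [], _, _, _, _, h, _ => by simp at h
  | [_], _, _, _, _, h, _ => by simp at h
  | x :: y :: l, hl, a, a', b, h, h' => by
    rw [tail_cons, zip_cons_cons, mem_cons, Prod.mk.injEq] at h h'
    have hy : y ∉ l := (nodup_cons.mp (nodup_cons.mp hl).2).1
    rcases h with ⟨rfl, rfl⟩ | h <;> rcases h' with ⟨rfl, h1⟩ | h'
    · rfl
    · exact absurd (by simpa using (of_mem_zip h').2) hy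
    · exact absurd (h1 ▸ by simpa using (of_mem_zip h).2) hy
    · exact (nodup_cons.mp hl).2.eq_of_mem_zip_tail_right h h'

end List

namespace Net

variable {X : Type} {N : Net X} {a b c p q u v : N.V}

theorem wellFounded_transGen (N : Net X) : WellFounded (TransGen N.E) :=
  haveI : IsTrans N.V (TransGen N.E) := ⟨fun _ _ _ => TransGen.trans⟩
  haveI : Std.Irrefl (TransGen N.E) := ⟨N.acyclic⟩
  Finite.wellFounded_of_trans_of_irrefl _

theorem wellFounded_transGen_swap (N : Net X) : WellFounded (swap (TransGen N.E)) :=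
  haveI : IsTrans N.V (swap (TransGen N.E)) := ⟨fun _ _ _ h h' => TransGen.trans h' h⟩
  haveI : Std.Irrefl (swap (TransGen N.E)) := ⟨N.acyclic⟩
  Finite.wellFounded_of_trans_of_irrefl _

theorem not_reflTransGen_of_E (h : N.E a b) : ¬ ReflTransGen N.E b a :=
  fun h' => N.acyclic a (TransGen.head' h h')

theorem eq_of_E_of_indeg_le_one (h : N.indeg v ≤ 1) (ha : N.E a v) (hb : N.E b v) : a = b :=
  (Set.ncard_le_one (Set.toFinite _)).mp h a ha b hb

theorem not_isReticulation_of_indeg_le_one (h : N.indeg v ≤ 1) : ¬ N.IsReticulation v := by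
  unfold IsReticulation; omega

theorem exists_pair_of_outdeg_eq_two (h : N.outdeg v = 2) :
    ∃ c₁ c₂, c₁ ≠ c₂ ∧ N.E v c₁ ∧ N.E v c₂ := by
  obtain ⟨c₁, c₂, hne, hset⟩ := Set.ncard_eq_two.mp h
  have hmem : ∀ c, N.E v c ↔ c = c₁ ∨ c = c₂ := fun c => Set.ext_iff.mp hset c
  exact ⟨c₁, c₂, hne, (hmem c₁).2 (Or.inl rfl), (hmem c₂).2 (Or.inr rfl)⟩

theorem existsUnique_parent_of_indeg_eq_one (h : N.indeg v = 1) : ∃! u, N.E u v := by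
  obtain ⟨u, hu⟩ := Set.ncard_eq_one.mp h
  have hmem : ∀ w, N.E w v ↔ w = u := fun w => Set.ext_iff.mp hu w
  exact ⟨u, (hmem u).2 rfl, fun w => (hmem w).1⟩

namespace ValidNet

variable (hN : N.ValidNet)
include hN

theorem not_E_leaf (x : X) (c : N.V) : ¬ N.E (N.leaf x) c := by
  have h := (hN.2.1 x).2
  simp only [outdeg, Set.ncard_eq_zero (Set.toFinite _), Set.eq_empty_iff_forall_notMem] at h
  exact h c

theorem not_isLeaf_of_E (h : N.E v c) : ¬ N.IsLeaf v := by
  rintro ⟨x, rfl⟩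
  exact hN.not_E_leaf x c h

theorem existsUnique_parent (hroot : v ≠ N.root) (hret : ¬ N.IsReticulation v) :
    ∃! u, N.E u v := by
  by_cases hleaf : N.IsLeaf v
  · obtain ⟨x, rfl⟩ := hleaf
    exact existsUnique_parent_of_indeg_eq_one (hN.2.1 x).1
  · rcases hN.2.2.2 v hroot hleaf with ⟨h, _⟩ | ⟨h, _⟩
    · exact existsUnique_parent_of_indeg_eq_one h
    · exact absurd h hret

theorem outdeg_le_two (v : N.V) : N.outdeg v ≤ 2 := by
  by_cases hroot : v = N.root
  · exact hroot ▸ hN.1.le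
  by_cases hleaf : N.IsLeaf v
  · obtain ⟨x, rfl⟩ := hleaf
    rw [(hN.2.1 x).2]; omega
  rcases hN.2.2.2 v hroot hleaf with ⟨_, h⟩ | ⟨_, h⟩ <;> omega

theorem eq_or_eq_of_E (h₁ : N.E v a) (h₂ : N.E v b) (hab : a ≠ b) (hc : N.E v c) :
    c = a ∨ c = b := by
  by_contra! h
  have hsub : {a, b, c} ⊆ {w : N.V | N.E v w} := by
    rintro w (rfl | rfl | rfl) <;> assumption
  have hle := Set.ncard_le_ncard hsub (Set.toFinite _)
  rw [Set.ncard_eq_three.mpr ⟨a, b, c, hab, h.1.symm, h.2.symm, rfl⟩] at hle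
  have := hN.outdeg_le_two v
  unfold outdeg at this
  omega

end ValidNet

theorem IsBinTree.outdeg_eq_two (hN : N.IsBinTree) (hv : ¬ N.IsLeaf v) : N.outdeg v = 2 := by
  by_cases hroot : v = N.root
  · exact hroot ▸ hN.1.1
  · rcases hN.1.2.2.2 v hroot hv with ⟨_, h⟩ | ⟨h, _⟩
    · exact h
    · exact absurd (h.trans (hN.2 v)) (by omega)

theorem HasNoShortcut.not_reflTransGen (hN : N.HasNoShortcut) (hret : N.IsReticulation v)
    (hp : N.E p v) (hq : N.E q v) (hpq : p ≠ q) : ¬ ReflTransGen N.E q p :=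
  fun h => hN q v ⟨hq, hret, p, hpq, hp, h⟩

theorem HasNoShortcut.not_E_root (hN : N.HasNoShortcut) (hret : N.IsReticulation v) :
    ¬ N.E N.root v := by
  intro h
  obtain ⟨p, hp, hpr⟩ := Set.exists_ne_of_one_lt_ncard (lt_of_lt_of_le one_lt_two hret) N.root
  exact hN.not_reflTransGen hret hp h hpr (N.connected p)

theorem TreeChild.exists_treePathTo (hN : N.TreeChild) (v : N.V) : ∃ x, N.TreePathTo v x := by
  induction v using (wellFounded_transGen_swap N).induction with
  | _ v ih =>
    by_cases hleaf : N.IsLeaf v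
    · obtain ⟨x, rfl⟩ := hleaf
      exact ⟨x, ReflTransGen.refl⟩
    · obtain ⟨c, hc, hcle⟩ := hN v hleaf
      obtain ⟨x, hx⟩ := ih c (TransGen.single hc)
      exact ⟨x, ReflTransGen.head ⟨hc, hcle⟩ hx⟩

section spanningTree

variable {R : N.V → N.V → Prop} {w : N.V}

structure IsSpanningTree (N : Net X) (R : N.V → N.V → Prop) : Prop where
  valid : N.ValidNet
  le : ∀ ⦃u v⦄, R u v → N.E u v
  existsUnique_parent : ∀ v, v ≠ N.root → ∃! u, R u v
  exists_child : ∀ v, ¬ N.IsLeaf v → ∃ c, R v c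
  root_two : ∃ c₁ c₂, c₁ ≠ c₂ ∧ R N.root c₁ ∧ R N.root c₂

def IsKept (R : N.V → N.V → Prop) (v : N.V) : Prop :=
  N.IsLeaf v ∨ ∃ c₁ c₂, c₁ ≠ c₂ ∧ R v c₁ ∧ R v c₂

def StepToUnkept (R : N.V → N.V → Prop) (a b : N.V) : Prop := R a b ∧ ¬ IsKept R b

def StepFromUnkept (R : N.V → N.V → Prop) (a b : N.V) : Prop := R a b ∧ ¬ IsKept R a

/-- Edges of the tree obtained from `R` by suppressing unkept vertices: `R`-paths whose
interior vertices are all unkept. -/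
def KeptEdge (R : N.V → N.V → Prop) (u v : N.V) : Prop :=
  ∃ w, ReflTransGen (StepToUnkept R) u w ∧ R w v

theorem IsKept.leaf (x : X) : IsKept R (N.leaf x) := Or.inl ⟨x, rfl⟩

theorem keptEdge_iff : KeptEdge R u v ↔ ∃ c, R u c ∧ ReflTransGen (StepFromUnkept R) c v := by
  constructor
  · rintro ⟨w, huw, hwv⟩
    induction huw using ReflTransGen.head_induction_on with
    | refl => exact ⟨v, hwv, ReflTransGen.refl⟩
    | head hab _ ih =>
      obtain ⟨c, hc, hcv⟩ := ih
      exact ⟨_, hab.1, ReflTransGen.head ⟨hc, hab.2⟩ hcv⟩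
  · rintro ⟨c, huc, hcv⟩
    induction hcv using ReflTransGen.head_induction_on generalizing u with
    | refl => exact ⟨u, ReflTransGen.refl, huc⟩
    | head hab _ ih =>
      obtain ⟨w, hmw, hwv⟩ := ih hab.1
      exact ⟨w, ReflTransGen.head ⟨huc, hab.2⟩ hmw, hwv⟩

theorem KeptEdge.transGen (h : KeptEdge R u v) : TransGen R u v := by
  obtain ⟨w, huw, hwv⟩ := h
  exact TransGen.tail' (ReflTransGen.mono (fun _ _ h => h.1) _ _ huw) hwv

theorem keptEdge_of_forall_mem_zip :
    ∀ (l : List N.V) {u v : N.V}, (∀ a b, (a, b) ∈ (u :: (l ++ [v])).zip (l ++ [v]) → R a b) →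
      (∀ w ∈ l, ¬ IsKept R w) → KeptEdge R u v
  | [], u, v, hrel, _ => ⟨u, ReflTransGen.refl, hrel u v (by simp)⟩
  | c :: l, u, v, hrel, hl => by
    obtain ⟨w, hcw, hwv⟩ := keptEdge_of_forall_mem_zip l
      (fun a b h => hrel a b (by simp only [List.cons_append, List.zip_cons_cons]; exact .tail _ h))
      (fun w hw => hl w (.tail _ hw))
    exact ⟨w, ReflTransGen.head ⟨hrel u c (by simp), hl c (.head _)⟩ hcw, hwv⟩

theorem reflTransGen_keptEdge (hu : IsKept R u) (huv : ReflTransGen R u v) (hv : IsKept R v) :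
    ReflTransGen (fun a b : {v // IsKept R v} => KeptEdge R a b) ⟨u, hu⟩ ⟨v, hv⟩ := by
  have key : ∀ {v}, ReflTransGen R u v → ∃ (a : N.V) (ha : IsKept R a),
      ReflTransGen (fun a b : {v // IsKept R v} => KeptEdge R a b) ⟨u, hu⟩ ⟨a, ha⟩ ∧
        ReflTransGen (StepToUnkept R) a v := by
    intro v huv
    induction huv with
    | refl => exact ⟨u, hu, ReflTransGen.refl, ReflTransGen.refl⟩
    | @tail b c _ hbc ih =>
      obtain ⟨a, ha, hua, hab⟩ := ih
      by_cases hc : IsKept R c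
      · exact ⟨c, hc, hua.tail ⟨b, hab, hbc⟩, ReflTransGen.refl⟩
      · exact ⟨a, ha, hua, hab.tail ⟨hbc, hc⟩⟩
  obtain ⟨a, ha, hua, hav⟩ := key huv
  rcases hav.cases_tail with rfl | ⟨_, _, hbv⟩
  · exact hua
  · exact absurd hv hbv.2

namespace IsSpanningTree

variable (hR : N.IsSpanningTree R)
include hR

theorem leftUnique : Relator.LeftUnique R := fun u _ v hu hu' =>
  (hR.existsUnique_parent v fun h => N.no_in_root u (hR.le (h ▸ hu))).unique hu hu'

theorem reflTransGen_le (h : ReflTransGen R u v) : ReflTransGen N.E u v :=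
  ReflTransGen.mono (fun _ _ => (hR.le ·)) _ _ h

theorem reflTransGen_root (v : N.V) : ReflTransGen R N.root v := by
  induction v using (wellFounded_transGen N).induction with
  | _ v ih =>
    by_cases hv : v = N.root
    · exact hv ▸ ReflTransGen.refl
    · obtain ⟨u, hu, _⟩ := hR.existsUnique_parent v hv
      exact (ih u (TransGen.single (hR.le hu))).tail hu

theorem exists_leaf (v : N.V) : ∃ x, ReflTransGen R v (N.leaf x) := by
  induction v using (wellFounded_transGen_swap N).induction with
  | _ v ih =>
    by_cases hleaf : N.IsLeaf v
    · obtain ⟨x, rfl⟩ := hleaf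
      exact ⟨x, ReflTransGen.refl⟩
    · obtain ⟨c, hc⟩ := hR.exists_child v hleaf
      obtain ⟨x, hx⟩ := ih c (TransGen.single (hR.le hc))
      exact ⟨x, ReflTransGen.head hc hx⟩

theorem not_reflTransGen_of_siblings (hab : R a b) (hac : R a c) (hbc : b ≠ c) :
    ¬ ReflTransGen R b c := fun h =>
  not_reflTransGen_of_E (hR.le hab) (hR.reflTransGen_le (h.of_rel_of_ne hR.leftUnique hbc hac))

theorem isKept_root : IsKept R N.root := Or.inr hR.root_two

theorem existsUnique_child (hv : ¬ IsKept R v) : ∃! c, R v c := by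
  obtain ⟨c, hc⟩ := hR.exists_child v fun h => hv (Or.inl h)
  exact ⟨c, hc, fun c' hc' => by_contra fun hne => hv (Or.inr ⟨c', c, hne, hc', hc⟩)⟩

theorem eq_of_reflTransGen_stepToUnkept (ha : ReflTransGen (StepToUnkept R) a c)
    (hb : ReflTransGen (StepToUnkept R) b c) (hka : IsKept R a) (hkb : IsKept R b) : a = b := by
  have U : Relator.LeftUnique (StepToUnkept R) := fun _ _ _ h h' => hR.leftUnique h.1 h'.1
  rcases ha.total_of_leftUnique U hb with h | h
  · rcases h.cases_tail with h | ⟨_, _, h⟩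
    · exact h.symm
    · exact absurd hkb h.2
  · rcases h.cases_tail with h | ⟨_, _, h⟩
    · exact h
    · exact absurd hka h.2

theorem eq_of_keptEdge (hu : IsKept R u) (hu' : IsKept R v) (h : KeptEdge R u w)
    (h' : KeptEdge R v w) : u = v := by
  obtain ⟨a, hua, haw⟩ := h
  obtain ⟨b, hvb, hbw⟩ := h'
  exact hR.eq_of_reflTransGen_stepToUnkept hua (hR.leftUnique haw hbw ▸ hvb) hu hu'

theorem existsUnique_firstKept (c : N.V) :
    ∃! d, IsKept R d ∧ ReflTransGen (StepFromUnkept R) c d := by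
  have U : Relator.RightUnique (StepFromUnkept R) := fun a _ _ h h' =>
    (hR.existsUnique_child h.2).unique h.1 h'.1
  have start : ∀ {y d}, IsKept R y → ReflTransGen (StepFromUnkept R) y d → y = d :=
    fun hy h => h.cases_head.resolve_right fun ⟨_, h, _⟩ => h.2 hy
  obtain ⟨d, hd⟩ : ∃ d, IsKept R d ∧ ReflTransGen (StepFromUnkept R) c d := by
    induction c using (wellFounded_transGen_swap N).induction with
    | _ c ih =>
      by_cases hc : IsKept R c
      · exact ⟨c, hc, ReflTransGen.refl⟩
      · obtain ⟨b, hb, _⟩ := hR.existsUnique_child hc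
        obtain ⟨d, hd, hbd⟩ := ih b (TransGen.single (hR.le hb))
        exact ⟨d, hd, ReflTransGen.head ⟨hb, hc⟩ hbd⟩
  refine ⟨d, hd, fun y hy => ?_⟩
  rcases ReflTransGen.total_of_right_unique U hy.2 hd.2 with h | h
  · exact start hy.1 h
  · exact (start hd.1 h).symm

noncomputable def firstKept (c : N.V) : N.V := (hR.existsUnique_firstKept c).exists.choose

theorem isKept_firstKept (c : N.V) : IsKept R (hR.firstKept c) :=
  (hR.existsUnique_firstKept c).exists.choose_spec.1

theorem reflTransGen_firstKept (c : N.V) :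
    ReflTransGen (StepFromUnkept R) c (hR.firstKept c) :=
  (hR.existsUnique_firstKept c).exists.choose_spec.2

theorem keptEdge_iff_firstKept (hv : IsKept R v) :
    KeptEdge R u v ↔ ∃ c, R u c ∧ hR.firstKept c = v := by
  rw [keptEdge_iff]
  refine exists_congr fun c => and_congr_right fun _ => ⟨fun h => ?_, fun h => ?_⟩
  · exact (hR.existsUnique_firstKept c).unique ⟨hR.isKept_firstKept c,
      hR.reflTransGen_firstKept c⟩ ⟨hv, h⟩
  · exact h ▸ hR.reflTransGen_firstKept c

theorem injOn_firstKept (hu : IsKept R u) : Set.InjOn hR.firstKept {c | R u c} := by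
  intro c₁ h₁ c₂ h₂ hd
  by_contra hne
  have U : Relator.LeftUnique (StepFromUnkept R) := fun _ _ _ h h' => hR.leftUnique h.1 h'.1
  have last : ∀ {a b}, a ≠ b → R u b → ¬ ReflTransGen (StepFromUnkept R) a b := by
    intro a b hab hub h
    rcases h.cases_tail with h | ⟨w, _, hw⟩
    · exact hab h.symm
    · exact hw.2 (hR.leftUnique hw.1 hub ▸ hu)
  rcases (hR.reflTransGen_firstKept c₁).total_of_leftUnique U
    (hd ▸ hR.reflTransGen_firstKept c₂) with h | h
  · exact last hne h₂ h
  · exact last (Ne.symm hne) h₁ h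

end IsSpanningTree

theorem IsSpanningTree.exists_chain_of_keptEdge (hR : N.IsSpanningTree R) (h : KeptEdge R u v) :
    ∃ l : List N.V, List.IsChain N.E (u :: l ++ [v]) ∧ ∀ w ∈ l, ¬ IsKept R w ∧
      ReflTransGen (StepFromUnkept R) w v ∧ ReflTransGen (StepToUnkept R) u w := by
  obtain ⟨w, huw, hwv⟩ := h
  induction huw using ReflTransGen.head_induction_on with
  | refl => exact ⟨[], List.isChain_pair.mpr (hR.le hwv), by simp⟩
  | head hab hbw ih =>
    obtain ⟨l, hl, hprops⟩ := ih
    refine ⟨_ :: l, List.isChain_cons_cons.mpr ⟨hR.le hab.1, hl⟩, ?_⟩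
    rintro w' (_ | ⟨_, hw'⟩)
    · obtain ⟨c, hc, hcv⟩ := keptEdge_iff.mp ⟨w, hbw, hwv⟩
      exact ⟨hab.2, ReflTransGen.head ⟨hc, hab.2⟩ hcv, ReflTransGen.single hab⟩
    · obtain ⟨h₁, h₂, h₃⟩ := hprops w' hw'
      exact ⟨h₁, h₂, ReflTransGen.head hab h₃⟩

noncomputable def suppress (R : N.V → N.V → Prop) (hR : N.IsSpanningTree R) : Net X where
  V := {v : N.V // IsKept R v}
  fintypeV := Fintype.ofFinite _
  E u v := KeptEdge R u v
  root := ⟨N.root, hR.isKept_root⟩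
  leaf x := ⟨N.leaf x, IsKept.leaf x⟩
  leaf_inj _ _ h := N.leaf_inj (congrArg Subtype.val h)
  acyclic v h := N.acyclic v <| TransGen.lift' Subtype.val
    (fun _ _ h => TransGen.mono (fun _ _ => (hR.le ·)) _ _ (KeptEdge.transGen h)) _ _ h
  no_in_root := by
    rintro u ⟨w, _, hw⟩
    exact N.no_in_root w (hR.le hw)
  connected := fun ⟨v, hv⟩ => reflTransGen_keptEdge hR.isKept_root (hR.reflTransGen_root v) hv

section suppress

variable (hR : N.IsSpanningTree R)

theorem isLeaf_suppress_iff {v : (suppress R hR).V} : (suppress R hR).IsLeaf v ↔ N.IsLeaf v.1 :=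
  ⟨fun ⟨x, hx⟩ => ⟨x, congrArg Subtype.val hx⟩, fun ⟨x, hx⟩ => ⟨x, Subtype.ext hx⟩⟩

theorem indeg_suppress_le_one (v : (suppress R hR).V) : (suppress R hR).indeg v ≤ 1 :=
  (Set.ncard_le_one (Set.toFinite _)).2 fun a ha b hb =>
    Subtype.ext (hR.eq_of_keptEdge a.2 b.2 ha hb)

theorem indeg_suppress_eq_one {v : (suppress R hR).V} (hv : v ≠ (suppress R hR).root) :
    (suppress R hR).indeg v = 1 := by
  refine le_antisymm (indeg_suppress_le_one hR v) ((Set.ncard_pos (Set.toFinite _)).2 ?_)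
  rcases ((suppress R hR).connected v).cases_tail with h | ⟨u, _, hu⟩
  · exact absurd h hv
  · exact ⟨u, hu⟩

theorem outdeg_suppress {v : (suppress R hR).V} (hv : ¬ (suppress R hR).IsLeaf v) :
    (suppress R hR).outdeg v = 2 := by
  obtain ⟨c₁, c₂, hne, h₁, h₂⟩ := v.2.resolve_left (mt (isLeaf_suppress_iff hR).2 hv)
  let g : N.V → (suppress R hR).V := fun c => ⟨hR.firstKept c, hR.isKept_firstKept c⟩
  have hchildren : {u | (suppress R hR).E v u} = g '' {c₁, c₂} := by
    ext u
    change KeptEdge R v.1 u.1 ↔ _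
    rw [hR.keptEdge_iff_firstKept u.2]
    constructor
    · rintro ⟨c, hc, hcu⟩
      exact ⟨c, hR.valid.eq_or_eq_of_E (hR.le h₁) (hR.le h₂) hne (hR.le hc), Subtype.ext hcu⟩
    · rintro ⟨c, hc, rfl⟩
      exact ⟨c, by rcases hc with rfl | rfl <;> assumption, rfl⟩
  have hinj : Set.InjOn g {c₁, c₂} := fun a ha b hb hab =>
    hR.injOn_firstKept v.2 (by rcases ha with rfl | rfl <;> assumption)
      (by rcases hb with rfl | rfl <;> assumption) (congrArg Subtype.val hab)
  rw [outdeg, hchildren, hinj.ncard_image, Set.ncard_pair hne]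

theorem outdeg_suppress_leaf (x : X) : (suppress R hR).outdeg ((suppress R hR).leaf x) = 0 := by
  refine (Set.ncard_eq_zero (Set.toFinite _)).2 (Set.eq_empty_of_forall_notMem fun u hu => ?_)
  obtain ⟨c, hc, _⟩ := TransGen.head'_iff.mp (KeptEdge.transGen hu)
  exact hR.valid.not_E_leaf x c (hR.le hc)

theorem isBinTree_suppress : (suppress R hR).IsBinTree := by
  obtain ⟨c, -, -, hc, -⟩ := hR.root_two
  have hroot : ¬ N.IsLeaf N.root := hR.valid.not_isLeaf_of_E (hR.le hc)
  refine ⟨⟨outdeg_suppress hR (mt (isLeaf_suppress_iff hR).1 hroot), fun x => ⟨?_,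
    outdeg_suppress_leaf hR x⟩, fun v hv => ?_, fun v hroot hleaf =>
    Or.inl ⟨indeg_suppress_eq_one hR hroot, outdeg_suppress hR hleaf⟩⟩, indeg_suppress_le_one hR⟩
  · exact indeg_suppress_eq_one hR fun h => hroot ⟨x, congrArg Subtype.val h⟩
  · by_contra hleaf
    exact two_ne_zero ((outdeg_suppress hR hleaf).symm.trans hv)

theorem cluster_suppress (v : (suppress R hR).V) :
    (suppress R hR).cluster v = {x | ReflTransGen R v.1 (N.leaf x)} := by
  ext x
  exact ⟨fun h => ReflTransGen.lift' Subtype.val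
      (fun _ _ h => (KeptEdge.transGen h).to_reflTransGen) _ _ h,
    fun h => reflTransGen_keptEdge v.2 h (IsKept.leaf x)⟩

theorem displays_suppress : N.Displays (suppress R hR) := by
  have : ∀ u v : (suppress R hR).V, ∃ l : List N.V, KeptEdge R u.1 v.1 →
      List.IsChain N.E (u.1 :: l ++ [v.1]) ∧ ∀ w ∈ l, ¬ IsKept R w ∧
        ReflTransGen (StepFromUnkept R) w v.1 ∧ ReflTransGen (StepToUnkept R) u.1 w := by
    intro u v
    by_cases h : KeptEdge R u.1 v.1
    · obtain ⟨l, hl⟩ := hR.exists_chain_of_keptEdge h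
      exact ⟨l, fun _ => hl⟩
    · exact ⟨[], fun h' => absurd h' h⟩
  choose paths hpaths using this
  refine ⟨⟨Subtype.val, Subtype.val_injective, fun _ => rfl, paths,
    fun u v h => (hpaths u v h).1, ?_, ?_⟩⟩
  · rintro u v h w hw ⟨w', rfl⟩
    exact ((hpaths u v h).2 _ hw).1 w'.2
  · intro u v u' v' h h' hne w hw hw'
    obtain ⟨-, hwv, huw⟩ := (hpaths u v h).2 w hw
    obtain ⟨-, hwv', huw'⟩ := (hpaths u' v' h').2 w hw'
    refine hne (Prod.ext (Subtype.ext ?_) (Subtype.ext ?_))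
    · exact hR.eq_of_reflTransGen_stepToUnkept huw huw' u.2 u'.2
    · exact (hR.existsUnique_firstKept w).unique ⟨v.2, hwv⟩ ⟨v'.2, hwv'⟩

end suppress

end spanningTree

section switching

variable {r : N.V}

def Switching (N : Net X) : Type :=
  ∀ r : {v : N.V // N.IsReticulation v}, {u : N.V // N.E u r.1}

instance : Finite N.Switching := by unfold Switching; infer_instance

def switchEdge (σ : N.Switching) (u v : N.V) : Prop :=
  N.E u v ∧ ∀ h : N.IsReticulation v, (σ ⟨v, h⟩).1 = u

theorem Binary.card_switching (hN : N.Binary) : Nat.card N.Switching = 2 ^ N.numRetic := by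
  classical
  have hpar (r : {v : N.V // N.IsReticulation v}) : Nat.card {u : N.V // N.E u r.1} = 2 :=
    (Nat.card_coe_set_eq {u | N.E u r.1}).trans (hN r.1 r.2)
  rw [Switching, Nat.card_pi, Finset.prod_congr rfl fun r _ => hpar r, Finset.prod_const,
    Finset.card_univ, ← Nat.card_eq_fintype_card]
  exact congrArg _ (Nat.card_coe_set_eq {v | N.IsReticulation v})

theorem switchEdge_of_indeg_le_one (σ : N.Switching) (h : N.E u v) (hv : N.indeg v ≤ 1) :
    switchEdge σ u v :=
  ⟨h, fun hr => absurd hr (not_isReticulation_of_indeg_le_one hv)⟩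

theorem TreePathTo.reflTransGen_switchEdge (σ : N.Switching) {x : X} (h : N.TreePathTo v x) :
    ReflTransGen (switchEdge σ) v (N.leaf x) :=
  ReflTransGen.mono (fun _ _ h => switchEdge_of_indeg_le_one σ h.1 h.2) _ _ h

theorem reflTransGen_switchEdge_of_eq {σ σ' : N.Switching}
    (hs : ∀ v (hv : N.IsReticulation v), TransGen N.E r v → σ ⟨v, hv⟩ = σ' ⟨v, hv⟩)
    (h : ReflTransGen (switchEdge σ) r u) : ReflTransGen (switchEdge σ') r u := by
  induction h with
  | refl => exact ReflTransGen.refl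
  | @tail b c hrb hbc ih =>
    refine ih.tail ⟨hbc.1, fun hc => ?_⟩
    rw [← hs c hc (TransGen.tail' (ReflTransGen.mono (fun _ _ h => h.1) _ _ hrb) hbc.1)]
    exact hbc.2 hc

theorem Normal.isSpanningTree_switchEdge (hN : N.Normal) (σ : N.Switching) :
    N.IsSpanningTree (switchEdge σ) where
  valid := hN.1
  le _ _ h := h.1
  existsUnique_parent v hv := by
    by_cases hr : N.IsReticulation v
    · exact ⟨_, ⟨(σ ⟨v, hr⟩).2, fun _ => rfl⟩, fun u hu => (hu.2 hr).symm⟩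
    · obtain ⟨u, hu, huniq⟩ := hN.1.existsUnique_parent hv hr
      exact ⟨u, ⟨hu, fun h => absurd h hr⟩, fun w hw => huniq w hw.1⟩
  exists_child v hv := by
    obtain ⟨c, hc, hcle⟩ := hN.2.1 v hv
    exact ⟨c, switchEdge_of_indeg_le_one σ hc hcle⟩
  root_two := by
    obtain ⟨c₁, c₂, hne, h₁, h₂⟩ := exists_pair_of_outdeg_eq_two hN.1.1
    have hs : ∀ {c}, N.E N.root c → switchEdge σ N.root c :=
      fun hc => ⟨hc, fun hr => absurd hc (hN.2.2.not_E_root hr)⟩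
    exact ⟨c₁, c₂, hne, hs h₁, hs h₂⟩

noncomputable def switchTree (hN : N.Normal) (σ : N.Switching) : Net X :=
  suppress (switchEdge σ) (hN.isSpanningTree_switchEdge σ)

theorem Iso.clusterSet_subset {M M' : Net X} (h : M.Iso M') : M.clusterSet ⊆ M'.clusterSet := by
  rintro _ ⟨v, rfl⟩
  obtain ⟨e, hE, hleaf⟩ := h
  have hpath (a b : M.V) : ReflTransGen M'.E (e a) (e b) ↔ ReflTransGen M.E a b := by
    refine ⟨fun h => ?_, ReflTransGen.lift e (fun a b => (hE a b).1) _ _⟩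
    have h' : ReflTransGen M.E (e.symm (e a)) (e.symm (e b)) :=
      ReflTransGen.lift e.symm (fun a b h => (hE _ _).2 (by simpa using h)) _ _ h
    simpa using h'
  exact ⟨e v, Set.ext fun x => (hleaf x ▸ hpath v (M.leaf x) :)⟩

theorem HasNoShortcut.not_reflTransGen_coparent_child (hN : N.HasNoShortcut)
    (hr : N.IsReticulation r) (hp : N.E p r) (hq : N.E q r) (hpq : p ≠ q) {c : N.V}
    (hqc : N.E q c) (hc : N.indeg c ≤ 1) : ¬ ReflTransGen N.E p c ∧ ¬ ReflTransGen N.E c p := by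
  refine ⟨fun h => ?_, fun h => hN.not_reflTransGen hr hp hq hpq (ReflTransGen.head hqc h)⟩
  rcases h.cases_tail with rfl | ⟨c', hpc', hc'c⟩
  · exact hN.not_reflTransGen hr hp hq hpq (ReflTransGen.single hqc)
  · exact hN.not_reflTransGen hr hq hp hpq.symm (eq_of_E_of_indeg_le_one hc hc'c hqc ▸ hpc')

/-- If `σ` and `σ'` first differ at `r`, the cluster below `p = σ r` in the tree of `σ` is not a
cluster of the tree of `σ'`: a vertex of the latter with the same cluster would lie either
below `r`, forcing the siblings `r` and a tree child of `p` to be comparable, or above the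
other parent `q = σ' r`, forcing `p` to be comparable with a tree child of `q`. -/
theorem Normal.not_iso_switchTree_of_lowest (hN : N.Normal) {σ σ' : N.Switching}
    (hr : N.IsReticulation r) (hne : (σ ⟨r, hr⟩).1 ≠ (σ' ⟨r, hr⟩).1)
    (hbelow : ∀ v (hv : N.IsReticulation v), TransGen N.E r v → σ ⟨v, hv⟩ = σ' ⟨v, hv⟩) :
    ¬ (N.switchTree hN σ).Iso (N.switchTree hN σ') := by
  intro hiso
  have hR := hN.isSpanningTree_switchEdge σ
  have hR' := hN.isSpanningTree_switchEdge σ'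
  set p := (σ ⟨r, hr⟩).1
  set q := (σ' ⟨r, hr⟩).1
  have hp : N.E p r := (σ ⟨r, hr⟩).2
  have hq : N.E q r := (σ' ⟨r, hr⟩).2
  have hpr : switchEdge σ p r := ⟨hp, fun _ => rfl⟩
  have hqr : switchEdge σ' q r := ⟨hq, fun _ => rfl⟩
  obtain ⟨cp, hpcp, hcp⟩ := hN.2.1 p (hN.1.not_isLeaf_of_E hp)
  obtain ⟨cq, hqcq, hcq⟩ := hN.2.1 q (hN.1.not_isLeaf_of_E hq)
  have hpcp' : switchEdge σ p cp := switchEdge_of_indeg_le_one σ hpcp hcp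
  have hrcp : r ≠ cp := fun h => not_isReticulation_of_indeg_le_one hcp (h ▸ hr)
  obtain ⟨w, hw⟩ := hiso.clusterSet_subset ⟨⟨p, Or.inr ⟨r, cp, hrcp, hpr, hpcp'⟩⟩, rfl⟩
  have hclust {x : X} : ReflTransGen (switchEdge σ') w.1 (N.leaf x) ↔
      ReflTransGen (switchEdge σ) p (N.leaf x) :=
    Set.ext_iff.mp ((cluster_suppress hR' w).symm.trans (hw.trans (cluster_suppress hR _))) x
  have below {u : N.V} (h : ReflTransGen (switchEdge σ') r u) : ReflTransGen (switchEdge σ) r u :=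
    reflTransGen_switchEdge_of_eq (fun v hv hrv => (hbelow v hv hrv).symm) h
  have not_below : ¬ ReflTransGen (switchEdge σ') r w.1 := by
    intro hrw
    obtain ⟨y, hy⟩ := hR.exists_leaf cp
    have hry := below (hrw.trans (hclust.2 (ReflTransGen.head hpcp' hy)))
    rcases hry.total_of_leftUnique hR.leftUnique hy with h | h
    · exact hR.not_reflTransGen_of_siblings hpr hpcp' hrcp h
    · exact hR.not_reflTransGen_of_siblings hpcp' hpr hrcp.symm h
  obtain ⟨z, hz⟩ := hR'.exists_leaf r
  rcases (hclust.2 (ReflTransGen.head hpr (below hz))).total_of_leftUnique hR'.leftUnique hz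
    with hwr | hrw
  · have hwq := hwr.of_rel_of_ne hR'.leftUnique (fun h => not_below (h ▸ .refl)) hqr
    obtain ⟨y, hy⟩ := hN.2.1.exists_treePathTo cq
    have hpy := hclust.1 ((hwq.tail (switchEdge_of_indeg_le_one σ' hqcq hcq)).trans
      (hy.reflTransGen_switchEdge σ'))
    have hincomp := hN.2.2.not_reflTransGen_coparent_child hr hp hq hne hqcq hcq
    rcases hpy.total_of_leftUnique hR.leftUnique (hy.reflTransGen_switchEdge σ) with h | h
    · exact hincomp.1 (hR.reflTransGen_le h)
    · exact hincomp.2 (hR.reflTransGen_le h)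
  · exact not_below hrw

theorem Normal.not_iso_switchTree (hN : N.Normal) {σ σ' : N.Switching} (h : σ ≠ σ') :
    ¬ (N.switchTree hN σ).Iso (N.switchTree hN σ') := by
  have hdiff : {v | ∃ hv : N.IsReticulation v, σ ⟨v, hv⟩ ≠ σ' ⟨v, hv⟩}.Nonempty := by
    by_contra hempty
    exact h (funext fun ⟨v, hv⟩ => by_contra fun hne => hempty ⟨v, hv, hne⟩)
  obtain ⟨r, ⟨hr, hne⟩, hmin⟩ := (wellFounded_transGen_swap N).has_min _ hdiff
  exact hN.not_iso_switchTree_of_lowest hr (fun h => hne (Subtype.ext h))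
    fun v hv hrv => by_contra fun hne' => hmin v ⟨hv, hne'⟩ hrv

end switching

end Net

namespace Emb

open Net

variable {X : Type} {N T : Net X} (e : Emb N T) {a b c v : N.V} {t s : T.V}

def Uses (a b : N.V) : Prop := (a, b) ∈ e.edges

variable {e}

theorem E_of_uses (h : e.Uses a b) : N.E a b := by
  obtain ⟨t, s, hts, hmem⟩ := h
  exact (e.chain t s hts).rel_of_mem_zip_tail hmem

variable (e)

theorem nodup_pathList (h : T.E t s) : (e.pathList t s).Nodup := by
  have : Std.Irrefl (TransGen N.E) := ⟨N.acyclic⟩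
  exact (List.isChain_iff_pairwise.mp ((e.chain t s h).imp fun _ _ => TransGen.single)).nodup

theorem reflTransGen_uses (h : ReflTransGen T.E t s) : ReflTransGen e.Uses (e.φ t) (e.φ s) := by
  induction h with
  | refl => exact ReflTransGen.refl
  | @tail s s' _ hss' ih =>
    exact ih.trans (ReflTransGen.mono (fun _ _ h => ⟨s, s', hss', h⟩) _ _
      (List.reflTransGen_mem_zip_tail (e.paths s s') (e.φ s) (e.φ s')))

theorem reflTransGen_uses_leaf (x : X) : ReflTransGen e.Uses (e.φ T.root) (N.leaf x) :=
  e.leafmap x ▸ e.reflTransGen_uses (T.connected (T.leaf x))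

theorem mem_paths_or_eq_of_mem_tail (hw : c ∈ (e.pathList t s).tail) :
    c ∈ e.paths t s ∨ c = e.φ s := by
  simpa [pathList] using hw

/-- Paths of distinct tree edges are internally disjoint, and a vertex of a tree has only one
incoming edge. -/
theorem eq_of_uses_of_uses (hT : T.IsBinTree) (h : e.Uses a c) (h' : e.Uses b c) : a = b := by
  obtain ⟨t, s, hts, hmem⟩ := h
  obtain ⟨t', s', hts', hmem'⟩ := h'
  obtain ⟨rfl, rfl⟩ : t = t' ∧ s = s' := by
    rcases e.mem_paths_or_eq_of_mem_tail (List.of_mem_zip hmem).2 with h₁ | h₁ <;>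
      rcases e.mem_paths_or_eq_of_mem_tail (List.of_mem_zip hmem').2 with h₂ | h₂
    · by_contra hne
      exact e.disjoint t s t' s' hts hts' (fun h => hne (Prod.ext_iff.mp h)) c h₁ h₂
    · exact absurd ⟨s', h₂.symm⟩ (e.internal t s hts c h₁)
    · exact absurd ⟨s, h₁.symm⟩ (e.internal t' s' hts' c h₂)
    · obtain rfl := e.inj (h₁.symm.trans h₂)
      exact ⟨eq_of_E_of_indeg_le_one (hT.2 s) hts hts', rfl⟩
  exact (e.nodup_pathList hts).eq_of_mem_zip_tail_right hmem hmem'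

theorem eq_of_uses_of_uses_of_notMem (hv : v ∉ Set.range e.φ) (h : e.Uses v a)
    (h' : e.Uses v b) : a = b := by
  obtain ⟨t, s, hts, hmem⟩ := h
  obtain ⟨t', s', hts', hmem'⟩ := h'
  have hpaths {t s : T.V} (hmem : v ∈ e.pathList t s) : v ∈ e.paths t s := by
    rcases List.mem_append.1 hmem with h | h
    · exact (List.mem_cons.1 h).resolve_left fun h => hv ⟨t, h.symm⟩
    · exact absurd ⟨s, (List.mem_singleton.1 h).symm⟩ hv
  obtain ⟨rfl, rfl⟩ : (t, s) = (t', s') := by_contra fun hne =>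
    e.disjoint t s t' s' hts hts' hne v (hpaths (List.of_mem_zip hmem).1)
      (hpaths (List.of_mem_zip hmem').1)
  exact (e.nodup_pathList hts).eq_of_mem_zip_tail_left hmem hmem'

theorem exists_uses_of_E (h : T.E t s) :
    ∃ b, e.Uses (e.φ t) b ∧ (b = e.φ s ∨ b ∈ e.paths t s) := by
  cases hl : e.paths t s with
  | nil => exact ⟨e.φ s, ⟨t, s, h, by simp [pathList, hl]⟩, Or.inl rfl⟩
  | cons c l => exact ⟨c, ⟨t, s, h, by simp [pathList, hl]⟩, Or.inr (.head _)⟩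

theorem exists_switching (hT : T.IsBinTree) :
    ∃ σ : N.Switching, ∀ ⦃a b⦄, e.Uses a b → switchEdge σ a b := by
  have (r : {v : N.V // N.IsReticulation v}) :
      ∃ u : {u : N.V // N.E u r.1}, ∀ a, e.Uses a r.1 → a = u.1 := by
    by_cases h : ∃ a, e.Uses a r.1
    · obtain ⟨a, ha⟩ := h
      exact ⟨⟨a, E_of_uses ha⟩, fun b hb => e.eq_of_uses_of_uses hT hb ha⟩
    · obtain ⟨u, hu⟩ := Set.nonempty_of_ncard_ne_zero (s := {u | N.E u r.1})
        (by have : 2 ≤ N.indeg r.1 := r.2; unfold indeg at this; omega)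
      exact ⟨⟨u, hu⟩, fun a ha => absurd ⟨a, ha⟩ h⟩
  choose σ hσ using this
  exact ⟨σ, fun a b h => ⟨E_of_uses h, fun hb => (hσ ⟨b, hb⟩ a h).symm⟩⟩

section spanningTree

variable {R : N.V → N.V → Prop} (hU : ∀ ⦃a b⦄, e.Uses a b → R a b)
include hU

theorem isKept_φ (hT : T.IsBinTree) (t : T.V) : IsKept R (e.φ t) := by
  by_cases ht : T.IsLeaf t
  · obtain ⟨x, rfl⟩ := ht
    exact e.leafmap x ▸ IsKept.leaf x
  obtain ⟨s₁, s₂, hs, h₁, h₂⟩ := exists_pair_of_outdeg_eq_two (hT.outdeg_eq_two ht)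
  obtain ⟨b₁, hb₁, hb₁'⟩ := e.exists_uses_of_E h₁
  obtain ⟨b₂, hb₂, hb₂'⟩ := e.exists_uses_of_E h₂
  refine Or.inr ⟨b₁, b₂, ?_, hU hb₁, hU hb₂⟩
  rintro rfl
  rcases hb₁' with h | h <;> rcases hb₂' with h' | h'
  · exact hs (e.inj (h.symm.trans h'))
  · exact e.internal t s₂ h₂ _ h' ⟨s₁, h.symm⟩
  · exact e.internal t s₁ h₁ _ h ⟨s₂, h'.symm⟩
  · exact e.disjoint t s₁ t s₂ h₁ h₂ (fun h => hs (Prod.ext_iff.mp h).2) _ h h'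

variable (hR : N.IsSpanningTree R)
include hR

/-- A kept vertex branches in `R`; each of its two children lies on the path of the embedding
to some leaf, so the embedding leaves it along two edges, which only images of tree vertices
do. -/
theorem mem_range_of_isKept (hv : IsKept R v) : v ∈ Set.range e.φ := by
  rcases hv with ⟨x, rfl⟩ | ⟨c₁, c₂, hne, h₁, h₂⟩
  · exact ⟨T.leaf x, e.leafmap x⟩
  have hin {c c'} (hc : R v c) (hc' : R v c') (hcc' : c ≠ c') : e.Uses v c := by
    have not_above : ¬ ReflTransGen R c (e.φ T.root) := fun h => by
      obtain ⟨x, hx⟩ := hR.exists_leaf c'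
      have hcx := h.trans (ReflTransGen.mono hU _ _ (e.reflTransGen_uses_leaf x))
      rcases hcx.total_of_leftUnique hR.leftUnique hx with h | h
      · exact hR.not_reflTransGen_of_siblings hc hc' hcc' h
      · exact hR.not_reflTransGen_of_siblings hc' hc hcc'.symm h
    obtain ⟨y, hy⟩ := hR.exists_leaf c
    rcases (e.reflTransGen_uses_leaf y).reflTransGen_or_of_le hU hR.leftUnique hy with h | h
    · rcases h.cases_tail with h | ⟨u, _, hu⟩
      · exact absurd (h ▸ ReflTransGen.refl) not_above
      · exact hR.leftUnique (hU hu) hc ▸ hu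
    · exact absurd h not_above
  by_contra hv
  exact hne (e.eq_of_uses_of_uses_of_notMem hv (hin h₁ h₂ hne) (hin h₂ h₁ hne.symm))

theorem keptEdge_φ_iff (hT : T.IsBinTree) : KeptEdge R (e.φ t) (e.φ s) ↔ T.E t s := by
  have keptEdge_of_E {t s : T.V} (h : T.E t s) : KeptEdge R (e.φ t) (e.φ s) :=
    keptEdge_of_forall_mem_zip (e.paths t s) (fun a b hab => hU ⟨t, s, h, hab⟩)
      fun w hw hk => e.internal t s h w hw (e.mem_range_of_isKept hU hR hk)
  refine ⟨fun h => ?_, keptEdge_of_E⟩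
  rcases (T.connected s).cases_tail with rfl | ⟨t', _, ht's⟩
  · have hcycle := (TransGen.mono (fun _ _ => (hR.le ·)) _ _ h.transGen).trans_left
      (ReflTransGen.mono (fun _ _ => E_of_uses) _ _ (e.reflTransGen_uses (T.connected t)))
    exact (N.acyclic _ hcycle).elim
  · obtain rfl := e.inj (hR.eq_of_keptEdge (e.isKept_φ hU hT t') (e.isKept_φ hU hT t)
      (keptEdge_of_E ht's) h)
    exact ht's

theorem iso_suppress (hT : T.IsBinTree) : T.Iso (suppress R hR) := by
  have hbij : Function.Bijective
      fun t : T.V => (⟨e.φ t, e.isKept_φ hU hT t⟩ : (suppress R hR).V) :=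
    ⟨fun a b h => e.inj (congrArg Subtype.val h), fun ⟨v, hv⟩ =>
      (e.mem_range_of_isKept hU hR hv).imp fun t ht => Subtype.ext ht⟩
  exact ⟨Equiv.ofBijective _ hbij, fun t s => (e.keptEdge_φ_iff hU hR hT).symm,
    fun x => Subtype.ext (e.leafmap x)⟩

end spanningTree

end Emb

theorem Net.Normal.exists_iso_switchTree {X : Type} {N T : Net X} (hN : N.Normal)
    (hT : T.IsBinTree) (e : Emb N T) : ∃ σ, T.Iso (N.switchTree hN σ) := by
  obtain ⟨σ, hσ⟩ := e.exists_switching hT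
  exact ⟨σ, e.iso_suppress hσ _ hT⟩

/-- A binary normal network with `k` reticulations displays exactly
`2^k` binary phylogenetic `X`-trees (counted up to isomorphism). -/
theorem stmt2 {X : Type} (N : Net X) (hnorm : N.Normal) (hbin : N.Binary)
    (k : ℕ) (hk : N.numRetic = k) :
    ∃ f : Fin (2 ^ k) → Net X,
      (∀ i, (f i).IsBinTree ∧ N.Displays (f i)) ∧
      (∀ i j, i ≠ j → ¬ (f i).Iso (f j)) ∧
      (∀ T : Net X, T.IsBinTree → N.Displays T → ∃ i, T.Iso (f i)) := by
  let g : N.Switching ≃ Fin (2 ^ k) := Finite.equivFinOfCardEq (hk ▸ hbin.card_switching)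
  refine ⟨fun i => N.switchTree hnorm (g.symm i), fun i => ⟨Net.isBinTree_suppress _,
    Net.displays_suppress _⟩, fun i j hij => hnorm.not_iso_switchTree (g.symm.injective.ne hij),
    fun T hT ⟨e⟩ => ?_⟩
  obtain ⟨σ, hσ⟩ := hnorm.exists_iso_switchTree hT e
  exact ⟨g σ, by simpa only [Equiv.symm_apply_apply] using hσ⟩
end

section
/- Let N be a binary normal network on X whose display set is P. If {a,b} is a cherry of N (the leaves a and b share a parent), then {a,b} is a cherry of every tree in P. -/
/-
Since `N` is a phylogenetic network, the leaves `a` and `b` have the common parent `p` as their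
only parent. In an embedding of `T`, the path realising the tree edge into `a` must enter `a`
through `p`, so `p` is either the image of the parent of `a` in `T` or an internal vertex of that
path; the same holds for `b`. Internal vertices of embedded paths avoid the image of the tree and
the paths of distinct edges are internally disjoint, so both cases must be the first one, and
injectivity of the embedding gives `a` and `b` the same parent in `T`.
-/

namespace Net

variable {X : Type} {N : Net X}

theorem ValidNet.eq_of_E_leaf (hN : N.ValidNet) {x : X} {p q : N.V}
    (hp : N.E p (N.leaf x)) (hq : N.E q (N.leaf x)) : p = q := by
  obtain ⟨u, hu⟩ := Set.ncard_eq_one.mp (hN.2.1 x).1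
  have hp' : p ∈ {w : N.V | N.E w (N.leaf x)} := hp
  have hq' : q ∈ {w : N.V | N.E w (N.leaf x)} := hq
  rw [hu, Set.mem_singleton_iff] at hp' hq'
  rw [hp', hq']

theorem ValidNet.exists_E_leaf (hN : N.ValidNet) (x : X) : ∃ q, N.E q (N.leaf x) := by
  obtain ⟨u, hu⟩ := Set.ncard_eq_one.mp (hN.2.1 x).1
  exact ⟨u, (Set.ext_iff.mp hu u).mpr rfl⟩

end Net

namespace Emb

variable {X : Type} {N T : Net X} (e : Emb N T)

theorem exists_mem_cons_paths_E {u v : T.V} (huv : T.E u v) :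
    ∃ z ∈ e.φ u :: e.paths u v, N.E z (e.φ v) := by
  have h := (e.chain u v huv).rel_getLast_head_of_append (List.cons_ne_nil _ _)
    (List.cons_ne_nil _ [])
  exact ⟨_, List.getLast_mem _, h⟩

theorem eq_of_mem_cons_paths {u v u' v' : T.V} {w : N.V} (huv : T.E u v) (huv' : T.E u' v')
    (hv : v ≠ v') (hw : w ∈ e.φ u :: e.paths u v) (hw' : w ∈ e.φ u' :: e.paths u' v') :
    u = u' := by
  rcases List.mem_cons.mp hw with rfl | hw <;> rcases List.mem_cons.mp hw' with h | hw'
  · exact e.inj h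
  · exact absurd ⟨u, rfl⟩ (e.internal u' v' huv' _ hw')
  · exact absurd ⟨u', h.symm⟩ (e.internal u v huv _ hw)
  · exact absurd hw' (e.disjoint u v u' v' huv huv' (fun h => hv (Prod.ext_iff.mp h).2) _ hw)

end Emb

theorem stmt3_general {X : Type} (N : Net X) (hnorm : N.Normal)
    (a b : X) (hc : N.Cherry a b)
    (T : Net X) (hT : T.IsBinTree) (hd : N.Displays T) :
    T.Cherry a b := by
  obtain ⟨e⟩ := hd
  obtain ⟨hab, p, hpa, hpb⟩ := hc
  obtain ⟨qa, hqa⟩ := hT.1.exists_E_leaf a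
  obtain ⟨qb, hqb⟩ := hT.1.exists_E_leaf b
  obtain ⟨za, hza, hza_p⟩ := e.exists_mem_cons_paths_E hqa
  obtain ⟨zb, hzb, hzb_p⟩ := e.exists_mem_cons_paths_E hqb
  rw [e.leafmap] at hza_p hzb_p
  obtain rfl := hnorm.1.eq_of_E_leaf hza_p hpa
  obtain rfl := hnorm.1.eq_of_E_leaf hzb_p hpb
  have hq : qa = qb :=
    e.eq_of_mem_cons_paths hqa hqb (fun h => hab (T.leaf_inj h)) hza hzb
  exact ⟨hab, qa, hqa, hq ▸ hqb⟩

/-- If `{a,b}` is a cherry of a binary normal network `N`, then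
`{a,b}` is a cherry of every tree in the display set of `N`. -/
theorem stmt3 {X : Type} (N : Net X) (hnorm : N.Normal) (hbin : N.Binary)
    (a b : X) (hc : N.Cherry a b)
    (T : Net X) (hT : T.IsBinTree) (hd : N.Displays T) :
    T.Cherry a b :=
  stmt3_general N hnorm a b hc T hT hd
end

section
/- Any binary normal network on a leaf set of size n has at most n−2 reticulations (for n ≥ 2). -/
section Aux

open Relation

variable {X : Type} (N : Net X)

/-- Tree-edge relation: an edge whose head has in-degree at most one. -/
def Net.TR (N : Net X) (a b : N.V) : Prop := N.E a b ∧ N.indeg b ≤ 1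

lemma Net.parent_unique {v a b : N.V} (h : N.indeg v ≤ 1)
    (ha : N.E a v) (hb : N.E b v) : a = b := by
  by_contra hne
  have hsub : ({a, b} : Set N.V) ⊆ {u | N.E u v} := by
    intro x hx
    rcases Set.mem_insert_iff.mp hx with rfl | hx
    · exact ha
    · rcases hx with rfl; exact hb
  have h2 : ({a, b} : Set N.V).ncard = 2 := Set.ncard_pair hne
  have hle := Set.ncard_le_ncard hsub (Set.toFinite _)
  unfold Net.indeg at h
  omega

lemma Net.tpath_lin : ∀ {v w : N.V}, ReflTransGen N.TR v w →
    ∀ {u : N.V}, ReflTransGen N.TR u w →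
      ReflTransGen N.TR u v ∨ ReflTransGen N.TR v u := by
  intro v w h
  induction h with
  | refl => intro u hu; left; exact hu
  | @tail b c hvb hbc ih =>
    intro u hu
    rcases hu.cases_tail with rfl | ⟨u', huu', hu'c⟩
    · right; exact hvb.tail hbc
    · have : u' = b := N.parent_unique hbc.2 hu'c.1 hbc.1
      subst this
      exact ih huu'

lemma Net.tpath_uniq {u v : N.V} {x : X}
    (hu : ∀ p, ¬ N.TR p u) (hv : ∀ p, ¬ N.TR p v)
    (h1 : N.TreePathTo u x) (h2 : N.TreePathTo v x) : u = v := by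
  have h1' : ReflTransGen N.TR u (N.leaf x) := h1
  have h2' : ReflTransGen N.TR v (N.leaf x) := h2
  rcases N.tpath_lin h2' h1' with h | h
  · rcases h.cases_tail with rfl | ⟨b, _, hb⟩
    · rfl
    · exact absurd hb (hv b)
  · rcases h.cases_tail with rfl | ⟨b, _, hb⟩
    · rfl
    · exact absurd hb (hu b)

lemma Net.exists_tpath (htc : N.TreeChild) (v : N.V) :
    ∃ x : X, N.TreePathTo v x := by
  haveI : Finite N.V := Finite.of_fintype N.V
  haveI : IsTrans N.V (fun a b => Relation.TransGen N.E b a) :=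
    ⟨fun a b c h1 h2 => h2.trans h1⟩
  haveI : IsIrrefl N.V (fun a b => Relation.TransGen N.E b a) :=
    ⟨fun a h => N.acyclic a h⟩
  have wf := Finite.wellFounded_of_trans_of_irrefl
    (fun a b : N.V => Relation.TransGen N.E b a)
  induction v using wf.induction with
  | _ v ih =>
    by_cases hl : N.IsLeaf v
    · obtain ⟨x, rfl⟩ := hl
      exact ⟨x, ReflTransGen.refl⟩
    · obtain ⟨c, hc, hc1⟩ := htc v hl
      obtain ⟨x, hx⟩ := ih c (TransGen.single hc)
      exact ⟨x, ReflTransGen.head ⟨hc, hc1⟩ hx⟩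

end Aux

/-- A binary normal network on `n ≥ 2` leaves has at most `n − 2`
reticulations. -/
theorem stmt9 {X : Type} [Fintype X] (n : ℕ) (hn : 2 ≤ n)
    (hX : Fintype.card X = n)
    (N : Net X) (hnorm : N.Normal) (hbin : N.Binary) :
    N.numRetic ≤ n - 2 := by
  classical
  obtain ⟨hval, htc, hns⟩ := hnorm
  obtain ⟨hout, hleaf, _, _⟩ := hval
  haveI : Nonempty X := by
    rw [← Fintype.card_pos_iff]; omega
  -- in-degree of the root is zero
  have hroot0 : N.indeg N.root = 0 := by
    have : {u : N.V | N.E u N.root} = ∅ := by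
      ext u; simp [N.no_in_root u]
    simp [Net.indeg, this]
  -- choose a tree path to a leaf from every vertex
  choose f hf using fun v => N.exists_tpath htc v
  -- reticulations are TR-sources
  have hretsrc : ∀ v : N.V, 2 ≤ N.indeg v → ∀ p, ¬ N.TR p v := by
    intro v hv p hp; have := hp.2; omega
  have hrootsrc : ∀ p, ¬ N.TR p N.root := fun p hp => N.no_in_root p hp.1
  -- the two children of the root
  have hone : 1 < {u : N.V | N.E N.root u}.ncard := by
    unfold Net.outdeg at hout; omega
  obtain ⟨c1, hc1, c2, hc2, hcc⟩ := (Set.one_lt_ncard (Set.toFinite _)).mp hone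
  -- children of the root have in-degree at most one (no shortcut)
  have hchild : ∀ c : N.V, N.E N.root c → N.indeg c ≤ 1 := by
    intro c hc
    by_contra hge
    push_neg at hge
    have h2 : 2 ≤ N.indeg c := hge
    have h1 : 1 < {u : N.V | N.E u c}.ncard := by unfold Net.indeg at h2; omega
    obtain ⟨p, hp, hpne⟩ := Set.exists_ne_of_one_lt_ncard h1 N.root
    exact hns N.root c ⟨hc, h2, p, hpne, hp, N.connected p⟩
  -- tree paths from the root through each child
  have hrp1 : N.TreePathTo N.root (f c1) :=
    Relation.ReflTransGen.head ⟨hc1, hchild c1 hc1⟩ (hf c1)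
  have hrp2 : N.TreePathTo N.root (f c2) :=
    Relation.ReflTransGen.head ⟨hc2, hchild c2 hc2⟩ (hf c2)
  -- the two leaves are distinct
  have hne12 : f c1 ≠ f c2 := by
    intro heq
    have h1' : Relation.ReflTransGen N.TR c1 (N.leaf (f c2)) := heq ▸ (hf c1)
    have h2' : Relation.ReflTransGen N.TR c2 (N.leaf (f c2)) := hf c2
    have key : ∀ a b : N.V, a ≠ b → N.E N.root a → N.E N.root b →
        ¬ Relation.ReflTransGen N.TR a b := by
      intro a b hab hra hrb h
      rcases h.cases_tail with rfl | ⟨q, haq, hqb⟩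
      · exact hab rfl
      · have : q = N.root := N.parent_unique hqb.2 hqb.1 hrb
        subst this
        rcases haq.cases_tail with rfl | ⟨q', _, hq'⟩
        · exact N.acyclic N.root (Relation.TransGen.single hra)
        · exact N.no_in_root q' hq'.1
    rcases N.tpath_lin h2' h1' with h | h
    · exact key c1 c2 hcc hc1 hc2 h
    · exact key c2 c1 (Ne.symm hcc) hc2 hc1 h
  -- the image of the reticulations avoids f c1 and f c2
  set R : Set N.V := {v : N.V | N.IsReticulation v} with hR
  have hinj : Set.InjOn f R := by
    intro a ha b hb heq
    exact N.tpath_uniq (hretsrc a ha) (hretsrc b hb) (hf a) (heq ▸ hf b)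
  have hsub : f '' R ⊆ ({f c1, f c2} : Set X)ᶜ := by
    rintro x ⟨r, hr, rfl⟩ hx
    have hr2 : 2 ≤ N.indeg r := hr
    have : r = N.root := by
      rcases Set.mem_insert_iff.mp hx with heq | heq
      · exact N.tpath_uniq (hretsrc r hr2) hrootsrc (hf r) (heq ▸ hrp1)
      · rcases heq with heq
        exact N.tpath_uniq (hretsrc r hr2) hrootsrc (hf r) (heq ▸ hrp2)
    rw [this, hroot0] at hr2
    omega
  -- count
  have h1 : N.numRetic = (f '' R).ncard := (Set.ncard_image_of_injOn hinj).symm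
  have h2 : (f '' R).ncard ≤ (({f c1, f c2} : Set X)ᶜ).ncard :=
    Set.ncard_le_ncard hsub (Set.toFinite _)
  have h3 := Set.ncard_add_ncard_compl ({f c1, f c2} : Set X)
  rw [Set.ncard_pair hne12, Nat.card_eq_fintype_card, hX] at h3
  omega
end

section
/- Let N be a binary tree-child network on X displaying a set P of phylogenetic X-trees via the cherry-picking sequence σ produced by the Construct Sequence algorithm. If two ordered pairs of σ have the same first coordinate ℓ, then there exists a reticulation v of N such that ℓ is the leaf at the end of a tree path starting at v. -/
/-- The in-degree of `v` in the intermediate state `(S, E)` of the algorithm. -/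
noncomputable def stateIndeg {X : Type} (N : Net X) (S : Set N.V)
    (E : N.V → N.V → Prop) (v : N.V) : ℕ := {u : N.V | u ∈ S ∧ E u v}.ncard

/-- A run of the Construct Sequence algorithm on `N` with verifier assignment
`ver` (assigning to the root and to each reticulation the leaf at the end of a
chosen tree path): from the state with vertex set `S` and edge relation `E`, the
algorithm can emit the given list of ordered pairs, ending with the single leaf
`last`. -/
inductive Run {X : Type} (N : Net X) (ver : N.V → X) :
    Set N.V → (N.V → N.V → Prop) → List (X × X) → X → Prop
  | single (S : Set N.V) (E : N.V → N.V → Prop) (x : X) :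
      (∀ w ∈ S, w = N.leaf x) → N.leaf x ∈ S →
      Run N ver S E [] x
  | cherryA (S : Set N.V) (E : N.V → N.V → Prop) (x y : X) (p : N.V)
      (rest : List (X × X)) (last : X) :
      x ≠ y → N.leaf x ∈ S → N.leaf y ∈ S → p ∈ S →
      E p (N.leaf x) → E p (N.leaf y) →
      (∃ w : N.V, N.IsReticulation w ∧ ver w = x ∧
        ¬ (w ∈ S ∧ 2 ≤ stateIndeg N S E w)) →
      Run N ver (S \ {N.leaf x, p})
        (fun a b => (E a b ∧ a ≠ p ∧ b ≠ p ∧ b ≠ N.leaf x) ∨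
          (E a p ∧ E p b ∧ b ≠ N.leaf x)) rest last →
      Run N ver S E ((x, y) :: rest) last
  | cherryB (S : Set N.V) (E : N.V → N.V → Prop) (x y : X) (p : N.V)
      (rest : List (X × X)) (last : X) :
      x ≠ y → N.leaf x ∈ S → N.leaf y ∈ S → p ∈ S →
      E p (N.leaf x) → E p (N.leaf y) →
      (¬ ∃ z ∈ ({x, y} : Set X), ∃ w : N.V, N.IsReticulation w ∧ ver w = z ∧
        ¬ (w ∈ S ∧ 2 ≤ stateIndeg N S E w)) →
      x ≠ ver N.root → (∀ w : N.V, N.IsReticulation w → ver w ≠ x) →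
      Run N ver (S \ {N.leaf x, p})
        (fun a b => (E a b ∧ a ≠ p ∧ b ≠ p ∧ b ≠ N.leaf x) ∨
          (E a p ∧ E p b ∧ b ≠ N.leaf x)) rest last →
      Run N ver S E ((x, y) :: rest) last
  | retCherry (S : Set N.V) (E : N.V → N.V → Prop) (x y : X) (px py : N.V)
      (rest : List (X × X)) (last : X) :
      x ≠ y → N.leaf x ∈ S → N.leaf y ∈ S → px ∈ S → py ∈ S →
      E px (N.leaf x) → E py (N.leaf y) → E py px →
      2 ≤ stateIndeg N S E px →
      Run N ver (S \ {px, py})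
        (fun a b => (E a b ∧ a ≠ px ∧ a ≠ py ∧ b ≠ px ∧ b ≠ py) ∨
          (E a py ∧ a ≠ px ∧ b = N.leaf y) ∨
          (E a px ∧ a ≠ py ∧ b = N.leaf x)) rest last →
      Run N ver S E ((x, y) :: rest) last

section Aux18

variable {X : Type} {N : Net X}

private lemma aux18_two_le {s : Set N.V} :
    2 ≤ s.ncard ↔ ∃ a ∈ s, ∃ b ∈ s, a ≠ b := by
  have : Finite N.V := Finite.of_fintype N.V
  exact Set.one_lt_ncard s.toFinite

private lemma aux18_two_le_state {S : Set N.V} {E : N.V → N.V → Prop} {v : N.V} :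
    2 ≤ stateIndeg N S E v ↔
      ∃ a, (a ∈ S ∧ E a v) ∧ ∃ b, (b ∈ S ∧ E b v) ∧ a ≠ b := by
  unfold stateIndeg
  rw [aux18_two_le]
  simp only [Set.mem_setOf_eq]

/-- From a reticulation with a directed path to the leaf `ℓ`, extract a
reticulation with a tree path to `ℓ`. -/
private lemma aux18_treePath {ℓ : X} {w : N.V}
    (hw : N.IsReticulation w) (h : Relation.ReflTransGen N.E w (N.leaf ℓ)) :
    ∃ v, N.IsReticulation v ∧ N.TreePathTo v ℓ := by
  have main : ∀ a, Relation.ReflTransGen N.E a (N.leaf ℓ) →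
      N.TreePathTo a ℓ ∨ ∃ v, N.IsReticulation v ∧ N.TreePathTo v ℓ := by
    intro a ha
    induction ha using Relation.ReflTransGen.head_induction_on with
    | refl => exact Or.inl Relation.ReflTransGen.refl
    | head hab _ ih =>
      rcases ih with tp | done
      · rcases le_or_gt (N.indeg _) 1 with h1 | h1
        · exact Or.inl (Relation.ReflTransGen.head ⟨hab, h1⟩ tp)
        · exact Or.inr ⟨_, h1, tp⟩
      · exact Or.inr done
  rcases main w h with tp | done
  · exact ⟨w, hw, tp⟩
  · exact done

/-- Any emitted pair has its first coordinate still present in the state. -/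
private lemma aux18_run_mem {ver : N.V → X} {S : Set N.V} {E : N.V → N.V → Prop}
    {pairs : List (X × X)} {last : X} (h : Run N ver S E pairs last) :
    ∀ (k : ℕ) (p : X × X), pairs[k]? = some p → N.leaf p.1 ∈ S := by
  induction h with
  | single S E x h1 h2 => intro k p hp; simp at hp
  | cherryA S E x y pp rest last hxy hx hy hpS hEx hEy hex hrun ih =>
    intro k p hp
    match k with
    | 0 => simp only [List.getElem?_cons_zero, Option.some.injEq] at hp; subst hp; exact hx
    | k + 1 => exact ((ih k p (by simpa using hp)).1 : _)
  | cherryB S E x y pp rest last hxy hx hy hpS hEx hEy hex hroot hret hrun ih =>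
    intro k p hp
    match k with
    | 0 => simp only [List.getElem?_cons_zero, Option.some.injEq] at hp; subst hp; exact hx
    | k + 1 => exact ((ih k p (by simpa using hp)).1 : _)
  | retCherry S E x y px py rest last hxy hx hy hpxS hpyS hEx hEy hEpp hind hrun ih =>
    intro k p hp
    match k with
    | 0 => simp only [List.getElem?_cons_zero, Option.some.injEq] at hp; subst hp; exact hx
    | k + 1 => exact ((ih k p (by simpa using hp)).1 : _)

/-- Preservation of the invariants by a cherry-reduction step. -/
private lemma aux18_inv_cherry {S : Set N.V} {E : N.V → N.V → Prop} {x : X} {p : N.V}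
    (inv1 : ∀ a b, E a b → Relation.ReflTransGen N.E a b)
    (inv2 : ∀ v ∈ S, 2 ≤ stateIndeg N S E v →
      ∃ w, N.IsReticulation w ∧ Relation.ReflTransGen N.E w v)
    (hpS : p ∈ S) :
    (∀ a b, ((E a b ∧ a ≠ p ∧ b ≠ p ∧ b ≠ N.leaf x) ∨ (E a p ∧ E p b ∧ b ≠ N.leaf x)) →
      Relation.ReflTransGen N.E a b) ∧
    (∀ v ∈ (S \ {N.leaf x, p} : Set N.V),
      2 ≤ stateIndeg N (S \ {N.leaf x, p})
        (fun a b => (E a b ∧ a ≠ p ∧ b ≠ p ∧ b ≠ N.leaf x) ∨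
          (E a p ∧ E p b ∧ b ≠ N.leaf x)) v →
      ∃ w, N.IsReticulation w ∧ Relation.ReflTransGen N.E w v) := by
  constructor
  · rintro a b (⟨h, -⟩ | ⟨h1, h2, -⟩)
    · exact inv1 a b h
    · exact (inv1 a p h1).trans (inv1 p b h2)
  · intro v hv hcard
    rcases aux18_two_le_state.mp hcard with ⟨a, ⟨haS, haE⟩, b, ⟨hbS, hbE⟩, hab⟩
    rcases haE with ⟨haE, hap, -⟩ | ⟨hap1, hpv, -⟩
    · rcases hbE with ⟨hbE, hbp, -⟩ | ⟨hbp1, hpv, -⟩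
      · -- both old edges into v
        exact inv2 v hv.1 (aux18_two_le_state.mpr ⟨a, ⟨haS.1, haE⟩, b, ⟨hbS.1, hbE⟩, hab⟩)
      · -- a old, b through p : old parents of v contain a and p
        exact inv2 v hv.1 (aux18_two_le_state.mpr ⟨a, ⟨haS.1, haE⟩, p, ⟨hpS, hpv⟩, hap⟩)
    · rcases hbE with ⟨hbE, hbp, -⟩ | ⟨hbp1, hpv', -⟩
      · exact inv2 v hv.1 (aux18_two_le_state.mpr ⟨b, ⟨hbS.1, hbE⟩, p, ⟨hpS, hpv⟩, hbp⟩)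
      · -- both through p : p has two state-parents
        obtain ⟨w, hw, hwp⟩ :=
          inv2 p hpS (aux18_two_le_state.mpr ⟨a, ⟨haS.1, hap1⟩, b, ⟨hbS.1, hbp1⟩, hab⟩)
        exact ⟨w, hw, hwp.trans (inv1 p v hpv)⟩

/-- Preservation of the invariants by a reticulated-cherry step. -/
private lemma aux18_inv_ret {S : Set N.V} {E : N.V → N.V → Prop} {x y : X} {px py : N.V}
    (inv1 : ∀ a b, E a b → Relation.ReflTransGen N.E a b)
    (inv2 : ∀ v ∈ S, 2 ≤ stateIndeg N S E v →
      ∃ w, N.IsReticulation w ∧ Relation.ReflTransGen N.E w v)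
    (hpxS : px ∈ S) (hpyS : py ∈ S)
    (hEx : E px (N.leaf x)) (hEy : E py (N.leaf y))
    (hind : 2 ≤ stateIndeg N S E px) :
    (∀ a b, ((E a b ∧ a ≠ px ∧ a ≠ py ∧ b ≠ px ∧ b ≠ py) ∨
        (E a py ∧ a ≠ px ∧ b = N.leaf y) ∨
        (E a px ∧ a ≠ py ∧ b = N.leaf x)) →
      Relation.ReflTransGen N.E a b) ∧
    (∀ v ∈ (S \ {px, py} : Set N.V),
      2 ≤ stateIndeg N (S \ {px, py})
        (fun a b => (E a b ∧ a ≠ px ∧ a ≠ py ∧ b ≠ px ∧ b ≠ py) ∨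
          (E a py ∧ a ≠ px ∧ b = N.leaf y) ∨
          (E a px ∧ a ≠ py ∧ b = N.leaf x)) v →
      ∃ w, N.IsReticulation w ∧ Relation.ReflTransGen N.E w v) := by
  constructor
  · rintro a b (⟨h, -⟩ | ⟨h1, -, rfl⟩ | ⟨h1, -, rfl⟩)
    · exact inv1 a b h
    · exact (inv1 a py h1).trans (inv1 py _ hEy)
    · exact (inv1 a px h1).trans (inv1 px _ hEx)
  · intro v hv hcard
    rcases aux18_two_le_state.mp hcard with ⟨a, ⟨haS, haE⟩, b, ⟨hbS, hbE⟩, hab⟩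
    rcases haE with ⟨haE, -, hapy, -⟩ | ⟨hapy, hapx, rfl⟩ | ⟨hapx, hapy, rfl⟩
    · rcases hbE with ⟨hbE, -, -, -⟩ | ⟨hbpy, hbpx, rfl⟩ | ⟨hbpx, hbpy, rfl⟩
      · exact inv2 v hv.1 (aux18_two_le_state.mpr ⟨a, ⟨haS.1, haE⟩, b, ⟨hbS.1, hbE⟩, hab⟩)
      · -- v = leaf y ; a old parent, b through py
        exact inv2 _ hv.1 (aux18_two_le_state.mpr ⟨a, ⟨haS.1, haE⟩, py, ⟨hpyS, hEy⟩, hapy⟩)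
      · -- v = leaf x : use that px is a state reticulation
        obtain ⟨w, hw, hwp⟩ := inv2 px hpxS hind
        exact ⟨w, hw, hwp.trans (inv1 px _ hEx)⟩
    · -- v = leaf y, a through py
      rcases hbE with ⟨hbE, -, hbpy, -⟩ | ⟨hbpy, hbpx, -⟩ | ⟨hbpx, hbpy, hxy⟩
      · exact inv2 _ hv.1 (aux18_two_le_state.mpr ⟨b, ⟨hbS.1, hbE⟩, py, ⟨hpyS, hEy⟩, hbpy⟩)
      · -- both through py
        obtain ⟨w, hw, hwp⟩ :=
          inv2 py hpyS (aux18_two_le_state.mpr ⟨a, ⟨haS.1, hapy⟩, b, ⟨hbS.1, hbpy⟩, hab⟩)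
        exact ⟨w, hw, hwp.trans (inv1 py _ hEy)⟩
      · -- v = leaf y and via third disjunct v = leaf x : then px works
        obtain ⟨w, hw, hwp⟩ := inv2 px hpxS hind
        exact ⟨w, hw, by rw [hxy]; exact hwp.trans (inv1 px _ hEx)⟩
    · -- v = leaf x : use px
      obtain ⟨w, hw, hwp⟩ := inv2 px hpxS hind
      exact ⟨w, hw, hwp.trans (inv1 px _ hEx)⟩

/-- Main induction: along any run whose state satisfies the two invariants,
a repeated first coordinate yields a reticulation with a tree path to it. -/
private lemma aux18_key {ver : N.V → X}
    (hver : ∀ w : N.V, (N.IsReticulation w ∨ w = N.root) → N.TreePathTo w (ver w))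
    {S : Set N.V} {E : N.V → N.V → Prop} {pairs : List (X × X)} {last : X}
    (h : Run N ver S E pairs last) :
    (∀ a b, E a b → Relation.ReflTransGen N.E a b) →
    (∀ v ∈ S, 2 ≤ stateIndeg N S E v →
      ∃ w, N.IsReticulation w ∧ Relation.ReflTransGen N.E w v) →
    ∀ (i j : ℕ) (ℓ : X) (p q : X × X), i < j →
      pairs[i]? = some p → pairs[j]? = some q → p.1 = ℓ → q.1 = ℓ →
      ∃ w, N.IsReticulation w ∧ N.TreePathTo w ℓ := by
  induction h with
  | single S E x h1 h2 =>
    intro _ _ i j ℓ p q hij hp hq hp1 hq1; simp at hp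
  | cherryA S E x y pp rest last hxy hx hy hpS hEx hEy hex hrun ih =>
    intro inv1 inv2 i j ℓ p q hij hp hq hp1 hq1
    match i, j with
    | 0, j =>
      simp only [List.getElem?_cons_zero, Option.some.injEq] at hp
      subst hp
      obtain rfl : x = ℓ := hp1
      obtain ⟨w, hwret, hwver, -⟩ := hex
      refine ⟨w, hwret, ?_⟩
      have := hver w (Or.inl hwret)
      rwa [hwver] at this
    | i + 1, j + 1 =>
      obtain ⟨inv1', inv2'⟩ := aux18_inv_cherry inv1 inv2 hpS
      exact ih inv1' inv2' i j ℓ p q (by omega) (by simpa using hp) (by simpa using hq) hp1 hq1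
  | cherryB S E x y pp rest last hxy hx hy hpS hEx hEy hex hroot hret hrun ih =>
    intro inv1 inv2 i j ℓ p q hij hp hq hp1 hq1
    match i, j with
    | 0, j + 1 =>
      simp only [List.getElem?_cons_zero, Option.some.injEq] at hp
      subst hp
      obtain rfl : x = ℓ := hp1
      -- the leaf x is removed, yet appears again later: contradiction
      have hmem := aux18_run_mem hrun j q (by simpa using hq)
      rw [hq1] at hmem
      exact absurd (Set.mem_insert _ _) hmem.2
    | i + 1, j + 1 =>
      obtain ⟨inv1', inv2'⟩ := aux18_inv_cherry inv1 inv2 hpS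
      exact ih inv1' inv2' i j ℓ p q (by omega) (by simpa using hp) (by simpa using hq) hp1 hq1
  | retCherry S E x y px py rest last hxy hx hy hpxS hpyS hEx hEy hEpp hind hrun ih =>
    intro inv1 inv2 i j ℓ p q hij hp hq hp1 hq1
    match i, j with
    | 0, j =>
      simp only [List.getElem?_cons_zero, Option.some.injEq] at hp
      subst hp
      obtain rfl : x = ℓ := hp1
      obtain ⟨w, hw, hwp⟩ := inv2 px hpxS hind
      exact aux18_treePath hw (hwp.trans (inv1 px _ hEx))
    | i + 1, j + 1 =>
      obtain ⟨inv1', inv2'⟩ := aux18_inv_ret inv1 inv2 hpxS hpyS hEx hEy hind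
      exact ih inv1' inv2' i j ℓ p q (by omega) (by simpa using hp) (by simpa using hq) hp1 hq1

end Aux18

/-- If the Construct Sequence algorithm applied to a binary
tree-child network `N` (displaying a set `P` of trees) produces a sequence in which
two ordered pairs have the same first coordinate `ℓ`, then there is a reticulation
`v` of `N` such that `ℓ` is the leaf at the end of a tree path starting at `v`. -/
theorem stmt18 {X : Type} (N : Net X) (hvalid : N.ValidNet) (hbin : N.Binary)
    (htc : N.TreeChild)
    (P : Set (Net X)) (hP : ∀ T ∈ P, T.IsBinTree ∧ N.Displays T)
    (ver : N.V → X)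
    (hver : ∀ w : N.V, (N.IsReticulation w ∨ w = N.root) → N.TreePathTo w (ver w))
    (pairs : List (X × X)) (last : X)
    (hrun : Run N ver Set.univ N.E pairs last)
    (i j : ℕ) (hij : i < j) (ℓ : X) (p q : X × X)
    (hp : pairs[i]? = some p) (hq : pairs[j]? = some q)
    (hp1 : p.1 = ℓ) (hq1 : q.1 = ℓ) :
    ∃ w : N.V, N.IsReticulation w ∧ N.TreePathTo w ℓ := by
  refine aux18_key hver hrun (fun a b h => Relation.ReflTransGen.single h)
    (fun v _ hcard => ⟨v, ?_, Relation.ReflTransGen.refl⟩) i j ℓ p q hij hp hq hp1 hq1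
  have : stateIndeg N Set.univ N.E v = N.indeg v := by
    unfold stateIndeg Net.indeg
    congr 1
    ext u
    simp
  rwa [this] at hcard
end
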